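/- arXiv:2509.06352 — 3 statements merged into one kernel-verified Lean document; each statement's English description precedes it below -/
import Mathlib

section
/- Let c be a coefficient, μ > 0 and λ ∈ ℝ with c(y)·(λ − c(y)μ²) > 1 for a.e. y ∈ [0,H]. Let u be a nontrivial Dirichlet solution of the reduced problem with flux v. Suppose z < z' are consecutive zeros of u in [0,H] (i.e. u(z) = u(z') = 0 and u has no zero in (z,z')), and let y* ∈ (z,z') satisfy v(y*) = 0. Then min( v(z)², v(z')² ) ≥ u(y*)². -/
/-
The energy `E = u² + v²` of a solution, `v` being the flux, satisfies
`c · E' / 2 = c (u' u + v' v) = u v (1 - c (λ - c μ²))` a.e., so under `c (λ - c μ²) > 1` it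
decreases where `u v ≥ 0` and increases where `u v ≤ 0`. Between consecutive zeros `u` keeps a
sign, and `v' = -(λ - c μ²) u` has the opposite one, so `v` is monotone and, vanishing at `y*`,
`u v ≥ 0` on `(z, y*)` and `u v ≤ 0` on `(y*, z')`. Hence `u(y*)² = E(y*)` is bounded by both
`E(z) = v(z)²` and `E(z') = v(z')²`.
-/

open MeasureTheory Set Filter Topology

noncomputable section

/-- `u` (with flux `v = c·u'` and weak derivative `g = u'`) is a solution of the reduced
problem `(c u')' + (λ - c μ²) u = 0` on the interval `[a, b]`:
`u` is absolutely continuous with derivative `g ∈ L²`, the flux `v` agrees a.e. with `c·g`,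
and `v` is absolutely continuous with derivative `(c μ² - λ)·u`. -/
def IsReducedSolutionOn (a b : ℝ) (c : ℝ → ℝ) (μ lam : ℝ) (u v g : ℝ → ℝ) : Prop :=
  IntervalIntegrable g volume a b ∧
  IntervalIntegrable (fun t => g t ^ 2) volume a b ∧
  (∀ y ∈ Set.Icc a b, u y = u a + ∫ t in a..y, g t) ∧
  (∀ᵐ y ∂volume.restrict (Set.Ioo a b), v y = c y * g y) ∧
  IntervalIntegrable (fun t => (c t * μ ^ 2 - lam) * u t) volume a b ∧
  (∀ y ∈ Set.Icc a b, v y = v a + ∫ t in a..y, (c t * μ ^ 2 - lam) * u t)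

/-- A coefficient on `[0, H]`: measurable and bounded between `cm` and `cM`. -/
def IsCoeff (H cm cM : ℝ) (c : ℝ → ℝ) : Prop :=
  Measurable c ∧ ∀ y ∈ Set.Icc (0 : ℝ) H, cm ≤ c y ∧ c y ≤ cM

open intervalIntegral

theorem intervalIntegral_nonneg_of_ae_Ioo {f : ℝ → ℝ} {a b : ℝ} (hab : a ≤ b)
    (hf : ∀ᵐ t, t ∈ Ioo a b → 0 ≤ f t) : 0 ≤ ∫ t in a..b, f t := by
  rw [integral_of_le hab, integral_Ioc_eq_integral_Ioo]
  exact integral_nonneg_of_ae ((ae_restrict_iff' measurableSet_Ioo).2 hf)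

theorem intervalIntegral_nonpos_of_ae_Ioo {f : ℝ → ℝ} {a b : ℝ} (hab : a ≤ b)
    (hf : ∀ᵐ t, t ∈ Ioo a b → f t ≤ 0) : ∫ t in a..b, f t ≤ 0 := by
  rw [integral_of_le hab, integral_Ioc_eq_integral_Ioo]
  exact integral_nonpos_of_ae ((ae_restrict_iff' measurableSet_Ioo).2 hf)

theorem ContinuousOn.mul_pos_of_forall_ne_zero {u : ℝ → ℝ} {a b : ℝ}
    (hu : ContinuousOn u (Ioo a b)) (h0 : ∀ t ∈ Ioo a b, u t ≠ 0) :
    ∀ s ∈ Ioo a b, ∀ t ∈ Ioo a b, 0 < u s * u t := by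
  intro s hs t ht
  by_contra! hst
  have hsub : uIcc s t ⊆ Ioo a b := ordConnected_Ioo.uIcc_subset hs ht
  have hzero : (0 : ℝ) ∈ uIcc (u s) (u t) := by
    rcases mul_nonpos_iff.1 hst with h | h
    · exact mem_uIcc.2 (Or.inr ⟨h.2, h.1⟩)
    · exact mem_uIcc.2 (Or.inl ⟨h.1, h.2⟩)
  obtain ⟨x, hx, hux⟩ := intermediate_value_uIcc (hu.mono hsub) hzero
  exact h0 x (hsub hx) hux

def IsPrimitiveOn (F f : ℝ → ℝ) (a b : ℝ) : Prop :=
  IntervalIntegrable f volume a b ∧ ∀ x ∈ Icc a b, F x = F a + ∫ t in a..x, f t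

namespace IsPrimitiveOn

variable {F f : ℝ → ℝ} {a b : ℝ}

theorem sub_eq_integral (hF : IsPrimitiveOn F f a b) {x y : ℝ} (hx : x ∈ Icc a b)
    (hy : y ∈ Icc a b) : F y - F x = ∫ t in x..y, f t := by
  have hint : ∀ z ∈ Icc a b, IntervalIntegrable f volume a z := fun z hz =>
    hF.1.mono_set (uIcc_subset_uIcc left_mem_uIcc (Icc_subset_uIcc hz))
  rw [hF.2 y hy, hF.2 x hx, ← integral_interval_sub_left (hint y hy) (hint x hx)]
  ring

theorem mono (hF : IsPrimitiveOn F f a b) {a' b' : ℝ} (hab' : a' ≤ b')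
    (hsub : Icc a' b' ⊆ Icc a b) : IsPrimitiveOn F f a' b' := by
  have ha' := hsub (left_mem_Icc.2 hab')
  have hb' := hsub (right_mem_Icc.2 hab')
  refine ⟨hF.1.mono_set (uIcc_subset_uIcc (Icc_subset_uIcc ha') (Icc_subset_uIcc hb')),
    fun x hx => ?_⟩
  rw [← hF.sub_eq_integral ha' (hsub hx)]
  ring

theorem continuousOn (hF : IsPrimitiveOn F f a b) : ContinuousOn F (Icc a b) :=
  ((continuousOn_primitive_interval' hF.1 left_mem_uIcc).const_add (F a)).mono
    Icc_subset_uIcc |>.congr hF.2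

theorem sq_sub_sq (hF : IsPrimitiveOn F f a b) (hab : a ≤ b) :
    F b ^ 2 - F a ^ 2 = ∫ t in a..b, 2 * (f t * F t) := by
  set P : ℝ → ℝ := fun x => F a + ∫ t in a..x, f t
  have hFP : EqOn F P (Icc a b) := hF.2
  have hP : AbsolutelyContinuousOnInterval P a b :=
    (LipschitzWith.const (F a)).lipschitzOnWith.absolutelyContinuousOnInterval.fun_add
      (hF.1.absolutelyContinuousOnInterval_intervalIntegral left_mem_uIcc)
  have hderiv : ∀ᵐ x, x ∈ uIcc a b → deriv P x = f x := by
    filter_upwards [hF.1.ae_hasDerivAt_integral] with x hx hmem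
    exact ((hx hmem a left_mem_uIcc).const_add (F a)).deriv
  have hftc := hP.integral_deriv_mul_eq_sub hP
  rw [hFP (right_mem_Icc.2 hab), hFP (left_mem_Icc.2 hab)]
  calc P b ^ 2 - P a ^ 2 = ∫ x in a..b, deriv P x * P x + P x * deriv P x := by
        rw [hftc]; ring
    _ = ∫ t in a..b, 2 * (f t * F t) := by
        refine integral_congr_ae ?_
        filter_upwards [hderiv] with x hx hmem
        have hmem' : x ∈ Icc a b := Ioc_subset_Icc_self (uIoc_of_le hab ▸ hmem)
        rw [hx (Icc_subset_uIcc hmem'), hFP hmem']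
        ring

end IsPrimitiveOn

theorem ae_mul_flux_deriv_nonpos {a b : ℝ} {c u : ℝ → ℝ} {μ lam : ℝ}
    (hc : ∀ᵐ t, t ∈ Ioo a b → 0 < c t ∧ 1 < c t * (lam - c t * μ ^ 2))
    (hu : ∀ s ∈ Ioo a b, ∀ t ∈ Ioo a b, 0 < u s * u t) {t : ℝ} (ht : t ∈ Ioo a b) :
    ∀ᵐ s, s ∈ Ioo a b → u t * ((c s * μ ^ 2 - lam) * u s) ≤ 0 := by
  filter_upwards [hc] with s hcs hs
  obtain ⟨hc0, hc1⟩ := hcs hs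
  have hgap : 0 < lam - c s * μ ^ 2 := pos_of_mul_pos_right (one_pos.trans hc1) hc0.le
  nlinarith [hu s hs t ht]

namespace IsReducedSolutionOn

variable {a b : ℝ} {c : ℝ → ℝ} {μ lam : ℝ} {u v g : ℝ → ℝ}

theorem isPrimitiveOn (hsol : IsReducedSolutionOn a b c μ lam u v g) :
    IsPrimitiveOn u g a b :=
  ⟨hsol.1, hsol.2.2.1⟩

theorem isPrimitiveOn_flux (hsol : IsReducedSolutionOn a b c μ lam u v g) :
    IsPrimitiveOn v (fun t => (c t * μ ^ 2 - lam) * u t) a b :=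
  ⟨hsol.2.2.2.2.1, hsol.2.2.2.2.2⟩

theorem mono (hsol : IsReducedSolutionOn a b c μ lam u v g) {a' b' : ℝ} (hab' : a' ≤ b')
    (hsub : Icc a' b' ⊆ Icc a b) : IsReducedSolutionOn a' b' c μ lam u v g := by
  have ha' := hsub (left_mem_Icc.2 hab')
  have hb' := hsub (right_mem_Icc.2 hab')
  have hu := hsol.isPrimitiveOn.mono hab' hsub
  have hv := hsol.isPrimitiveOn_flux.mono hab' hsub
  exact ⟨hu.1, hsol.2.1.mono_set (uIcc_subset_uIcc (Icc_subset_uIcc ha') (Icc_subset_uIcc hb')),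
    hu.2, ae_restrict_of_ae_restrict_of_subset (Ioo_subset_Ioo ha'.1 hb'.2) hsol.2.2.2.1,
    hv.1, hv.2⟩

theorem mul_flux_nonneg_of_flux_right_eq_zero (hsol : IsReducedSolutionOn a b c μ lam u v g)
    (hab : a ≤ b) (hc : ∀ᵐ t, t ∈ Ioo a b → 0 < c t ∧ 1 < c t * (lam - c t * μ ^ 2))
    (hu : ∀ s ∈ Ioo a b, ∀ t ∈ Ioo a b, 0 < u s * u t) (hvb : v b = 0) :
    ∀ t ∈ Ioo a b, 0 ≤ u t * v t := by
  intro t ht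
  have hflux := hsol.isPrimitiveOn_flux.sub_eq_integral (Ioo_subset_Icc_self ht)
    (right_mem_Icc.2 hab)
  have hint : ∫ s in t..b, u t * ((c s * μ ^ 2 - lam) * u s) ≤ 0 := by
    refine intervalIntegral_nonpos_of_ae_Ioo ht.2.le ?_
    filter_upwards [ae_mul_flux_deriv_nonpos hc hu ht] with s hs hmem
    exact hs ⟨ht.1.trans hmem.1, hmem.2⟩
  rw [intervalIntegral.integral_const_mul, ← hflux, hvb] at hint
  linarith

theorem mul_flux_nonpos_of_flux_left_eq_zero (hsol : IsReducedSolutionOn a b c μ lam u v g)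
    (hab : a ≤ b) (hc : ∀ᵐ t, t ∈ Ioo a b → 0 < c t ∧ 1 < c t * (lam - c t * μ ^ 2))
    (hu : ∀ s ∈ Ioo a b, ∀ t ∈ Ioo a b, 0 < u s * u t) (hva : v a = 0) :
    ∀ t ∈ Ioo a b, u t * v t ≤ 0 := by
  intro t ht
  have hflux := hsol.isPrimitiveOn_flux.sub_eq_integral (left_mem_Icc.2 hab)
    (Ioo_subset_Icc_self ht)
  have hint : ∫ s in a..t, u t * ((c s * μ ^ 2 - lam) * u s) ≤ 0 := by
    refine intervalIntegral_nonpos_of_ae_Ioo ht.1.le ?_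
    filter_upwards [ae_mul_flux_deriv_nonpos hc hu ht] with s hs hmem
    exact hs ⟨hmem.1, hmem.2.trans ht.2⟩
  rw [intervalIntegral.integral_const_mul, ← hflux, hva] at hint
  linarith

theorem sq_add_sq_sub_sq_add_sq (hsol : IsReducedSolutionOn a b c μ lam u v g) (hab : a ≤ b) :
    (u b ^ 2 + v b ^ 2) - (u a ^ 2 + v a ^ 2) =
      ∫ t in a..b, 2 * (g t * u t + (c t * μ ^ 2 - lam) * u t * v t) := by
  have hu := hsol.isPrimitiveOn
  have hv := hsol.isPrimitiveOn_flux
  have hgu : IntervalIntegrable (fun t => 2 * (g t * u t)) volume a b :=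
    (hu.1.mul_continuousOn (uIcc_of_le hab ▸ hu.continuousOn)).const_mul 2
  have hwv : IntervalIntegrable (fun t => 2 * ((c t * μ ^ 2 - lam) * u t * v t)) volume a b :=
    (hv.1.mul_continuousOn (uIcc_of_le hab ▸ hv.continuousOn)).const_mul 2
  calc (u b ^ 2 + v b ^ 2) - (u a ^ 2 + v a ^ 2) = (u b ^ 2 - u a ^ 2) + (v b ^ 2 - v a ^ 2) := by
        ring
    _ = ∫ t in a..b, (2 * (g t * u t) + 2 * ((c t * μ ^ 2 - lam) * u t * v t)) := by
        rw [hu.sq_sub_sq hab, hv.sq_sub_sq hab, integral_add hgu hwv]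
    _ = _ := by
        congr 1 with t
        ring

theorem ae_energy_density (hsol : IsReducedSolutionOn a b c μ lam u v g) :
    ∀ᵐ t, t ∈ Ioo a b →
      c t * (g t * u t + (c t * μ ^ 2 - lam) * u t * v t) =
        u t * v t * (1 - c t * (lam - c t * μ ^ 2)) := by
  filter_upwards [(ae_restrict_iff' measurableSet_Ioo).1 hsol.2.2.2.1] with t hv hmem
  rw [hv hmem]
  ring

theorem sq_add_sq_le_of_mul_flux_nonneg (hsol : IsReducedSolutionOn a b c μ lam u v g)
    (hab : a ≤ b) (hc : ∀ᵐ t, t ∈ Ioo a b → 0 < c t ∧ 1 < c t * (lam - c t * μ ^ 2))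
    (huv : ∀ t ∈ Ioo a b, 0 ≤ u t * v t) : u b ^ 2 + v b ^ 2 ≤ u a ^ 2 + v a ^ 2 := by
  have hint : ∫ t in a..b, 2 * (g t * u t + (c t * μ ^ 2 - lam) * u t * v t) ≤ 0 := by
    refine intervalIntegral_nonpos_of_ae_Ioo hab ?_
    filter_upwards [hc, hsol.ae_energy_density] with t hct hdens hmem
    obtain ⟨hc0, hc1⟩ := hct hmem
    have h : c t * (g t * u t + (c t * μ ^ 2 - lam) * u t * v t) ≤ 0 := by
      rw [hdens hmem]
      exact mul_nonpos_of_nonneg_of_nonpos (huv t hmem) (by linarith)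
    linarith [nonpos_of_mul_nonpos_right h hc0]
  linarith [hsol.sq_add_sq_sub_sq_add_sq hab]

theorem sq_add_sq_le_of_mul_flux_nonpos (hsol : IsReducedSolutionOn a b c μ lam u v g)
    (hab : a ≤ b) (hc : ∀ᵐ t, t ∈ Ioo a b → 0 < c t ∧ 1 < c t * (lam - c t * μ ^ 2))
    (huv : ∀ t ∈ Ioo a b, u t * v t ≤ 0) : u a ^ 2 + v a ^ 2 ≤ u b ^ 2 + v b ^ 2 := by
  have hint : 0 ≤ ∫ t in a..b, 2 * (g t * u t + (c t * μ ^ 2 - lam) * u t * v t) := by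
    refine intervalIntegral_nonneg_of_ae_Ioo hab ?_
    filter_upwards [hc, hsol.ae_energy_density] with t hct hdens hmem
    obtain ⟨hc0, hc1⟩ := hct hmem
    have h : 0 ≤ c t * (g t * u t + (c t * μ ^ 2 - lam) * u t * v t) := by
      rw [hdens hmem]
      exact mul_nonneg_of_nonpos_of_nonpos (huv t hmem) (by linarith)
    linarith [nonneg_of_mul_nonneg_right h hc0]
  linarith [hsol.sq_add_sq_sub_sq_add_sq hab]

theorem sq_le_min_sq_add_sq_of_flux_eq_zero (hsol : IsReducedSolutionOn a b c μ lam u v g)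
    (hc : ∀ᵐ t, t ∈ Ioo a b → 0 < c t ∧ 1 < c t * (lam - c t * μ ^ 2))
    (hu : ∀ t ∈ Ioo a b, u t ≠ 0) {y : ℝ} (hy : y ∈ Ioo a b) (hvy : v y = 0) :
    u y ^ 2 ≤ min (u a ^ 2 + v a ^ 2) (u b ^ 2 + v b ^ 2) := by
  have hsign :=
    (hsol.isPrimitiveOn.continuousOn.mono Ioo_subset_Icc_self).mul_pos_of_forall_ne_zero hu
  have hleft : Ioo a y ⊆ Ioo a b := Ioo_subset_Ioo_right hy.2.le
  have hright : Ioo y b ⊆ Ioo a b := Ioo_subset_Ioo_left hy.1.le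
  have hcl := hc.mono fun t ht hmem => ht (hleft hmem)
  have hcr := hc.mono fun t ht hmem => ht (hright hmem)
  have hsl := hsol.mono hy.1.le (Icc_subset_Icc_right hy.2.le)
  have hsr := hsol.mono hy.2.le (Icc_subset_Icc_left hy.1.le)
  have hEl := hsl.sq_add_sq_le_of_mul_flux_nonneg hy.1.le hcl
    (hsl.mul_flux_nonneg_of_flux_right_eq_zero hy.1.le hcl
      (fun s hs t ht => hsign s (hleft hs) t (hleft ht)) hvy)
  have hEr := hsr.sq_add_sq_le_of_mul_flux_nonpos hy.2.le hcr
    (hsr.mul_flux_nonpos_of_flux_left_eq_zero hy.2.le hcr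
      (fun s hs t ht => hsign s (hright hs) t (hright ht)) hvy)
  rw [hvy] at hEl hEr
  exact le_min (by linarith) (by linarith)

end IsReducedSolutionOn

theorem stmt11_general (cm cM H : ℝ) (hcm : 0 < cm)
    (c : ℝ → ℝ) (hc : IsCoeff H cm cM c)
    (μ lam : ℝ)
    (hbig : ∀ᵐ y ∂volume.restrict (Set.Icc (0:ℝ) H), 1 < c y * (lam - c y * μ ^ 2))
    (u v g : ℝ → ℝ) (hsol : IsReducedSolutionOn 0 H c μ lam u v g)
    (z z' : ℝ) (hz : z ∈ Set.Icc (0:ℝ) H) (hz' : z' ∈ Set.Icc (0:ℝ) H) (hzz : z < z')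
    (huz : u z = 0) (huz' : u z' = 0) (hcons : ∀ y ∈ Set.Ioo z z', u y ≠ 0)
    (ystar : ℝ) (hys : ystar ∈ Set.Ioo z z') (hvs : v ystar = 0) :
    u ystar ^ 2 ≤ min (v z ^ 2) (v z' ^ 2) := by
  have hsub : Icc z z' ⊆ Icc 0 H := Icc_subset_Icc hz.1 hz'.2
  have hcz : ∀ᵐ t, t ∈ Ioo z z' → 0 < c t ∧ 1 < c t * (lam - c t * μ ^ 2) := by
    filter_upwards [(ae_restrict_iff' measurableSet_Icc).1 hbig] with t ht hmem
    have hmem' := hsub (Ioo_subset_Icc_self hmem)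
    exact ⟨hcm.trans_le (hc.2 t hmem').1, ht hmem'⟩
  have h := (hsol.mono hzz.le hsub).sq_le_min_sq_add_sq_of_flux_eq_zero hcz hcons hys hvs
  simpa [huz, huz'] using h

/-- between consecutive zeros `z < z'` of `u`, the flux at the endpoints
dominates the interior amplitude: `min(v(z)², v(z')²) ≥ u(y*)²` where `v(y*) = 0`. -/
theorem stmt11 (cm cM H : ℝ) (hcm : 0 < cm) (hcmM : cm < cM) (hH : 0 < H)
    (c : ℝ → ℝ) (hc : IsCoeff H cm cM c)
    (μ lam : ℝ) (hμ : 0 < μ)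
    (hbig : ∀ᵐ y ∂volume.restrict (Set.Icc (0:ℝ) H), 1 < c y * (lam - c y * μ ^ 2))
    (u v g : ℝ → ℝ) (hsol : IsReducedSolutionOn 0 H c μ lam u v g)
    (hu0 : u 0 = 0) (huH : u H = 0) (hnt : ∃ y ∈ Set.Icc (0 : ℝ) H, u y ≠ 0)
    (z z' : ℝ) (hz : z ∈ Set.Icc (0:ℝ) H) (hz' : z' ∈ Set.Icc (0:ℝ) H) (hzz : z < z')
    (huz : u z = 0) (huz' : u z' = 0) (hcons : ∀ y ∈ Set.Ioo z z', u y ≠ 0)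
    (ystar : ℝ) (hys : ystar ∈ Set.Ioo z z') (hvs : v ystar = 0) :
    u ystar ^ 2 ≤ min (v z ^ 2) (v z' ^ 2) :=
  stmt11_general cm cM H hcm c hc μ lam hbig u v g hsol z z' hz hz' hzz huz huz' hcons ystar hys hvs
end
end

section
/- Let a < b be reals, let α : [a,b] → (0,∞) be continuously differentiable, and let w : [a,b] → ℝ be twice differentiable with w''(t) + α(t)² w(t) = 0 for all t ∈ [a,b]. Define E(t) := w(t)² + (w'(t)/α(t))². Then E'(t) = −2 (α'(t)/α(t)) (w'(t)/α(t))², and consequently for all t₁, t₂ ∈ [a,b] with t₁ ≤ t₂, E(t₂) ≤ E(t₁)·exp( 2∫_{t₁}^{t₂} |α'(s)|/α(s) ds ) and E(t₁) ≤ E(t₂)·exp( 2∫_{t₁}^{t₂} |α'(s)|/α(s) ds ). -/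
/-!
Substituting `w'' = -α² w` into the derivative of `E`, the terms `±2 w w'` cancel and
`E' = -2 (α'/α) (w'/α)²`, so `|E'| ≤ 2 (|α'|/α) E`. Hence `E · exp (-∫ 2|α'|/α)` is antitone
and `E · exp (∫ 2|α'|/α)` is monotone (Gronwall forwards and backwards in time), which gives
the two bounds.
-/

open Set Real intervalIntegral

theorem hasDerivAt_primitive_of_continuousOn {g : ℝ → ℝ} {a b x : ℝ}
    (hg : ContinuousOn g (Icc a b)) (hx : x ∈ Ioo a b) :
    HasDerivAt (fun t => ∫ s in a..t, g s) (g x) x :=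
  integral_hasDerivAt_right
    ((hg.mono (Icc_subset_Icc_right hx.2.le)).intervalIntegrable_of_Icc hx.1.le)
    ((hg.mono Ioo_subset_Icc_self).stronglyMeasurableAtFilter isOpen_Ioo x hx)
    (hg.continuousAt (Icc_mem_nhds hx.1 hx.2))

theorem continuousOn_primitive_of_continuousOn {g : ℝ → ℝ} {a b : ℝ} (hab : a ≤ b)
    (hg : ContinuousOn g (Icc a b)) :
    ContinuousOn (fun t => ∫ s in a..t, g s) (Icc a b) := by
  simpa only [uIcc_of_le hab] using continuousOn_primitive_interval'
    (hg.intervalIntegrable_of_Icc hab) (left_mem_uIcc (a := a) (b := b))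

theorem monotoneOn_mul_exp_neg_integral {f f' g : ℝ → ℝ} {a b : ℝ} (hab : a ≤ b)
    (hf : ContinuousOn f (Icc a b)) (hf' : ∀ x ∈ Ioo a b, HasDerivAt f (f' x) x)
    (hg : ContinuousOn g (Icc a b)) (hle : ∀ x ∈ Ioo a b, g x * f x ≤ f' x) :
    MonotoneOn (fun t => f t * exp (-∫ s in a..t, g s)) (Icc a b) := by
  refine monotoneOn_of_hasDerivWithinAt_nonneg (convex_Icc a b)
    (f' := fun x => f' x * exp (-∫ s in a..x, g s) + f x * (exp (-∫ s in a..x, g s) * -g x))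
    (hf.mul (continuous_exp.comp_continuousOn (continuousOn_primitive_of_continuousOn hab hg).neg))
    (fun x hx => ?_) (fun x hx => ?_)
  · rw [interior_Icc] at hx
    exact ((hf' x hx).mul ((hasDerivAt_primitive_of_continuousOn hg hx).neg.exp)).hasDerivWithinAt
  · rw [interior_Icc] at hx
    have := mul_nonneg (sub_nonneg.2 (hle x hx)) (exp_pos (-∫ s in a..x, g s)).le
    linarith

theorem le_mul_exp_integral_of_deriv_le {f f' g : ℝ → ℝ} {a b : ℝ} (hab : a ≤ b)
    (hf : ContinuousOn f (Icc a b)) (hf' : ∀ x ∈ Ioo a b, HasDerivAt f (f' x) x)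
    (hg : ContinuousOn g (Icc a b)) (hle : ∀ x ∈ Ioo a b, f' x ≤ g x * f x) :
    f b ≤ f a * exp (∫ s in a..b, g s) := by
  have hmono := monotoneOn_mul_exp_neg_integral hab hf.neg (fun x hx => (hf' x hx).neg) hg
    (fun x hx => by simpa only [Pi.neg_apply, mul_neg, neg_le_neg_iff] using hle x hx)
    (left_mem_Icc.2 hab) (right_mem_Icc.2 hab) hab
  simp only [Pi.neg_apply, integral_same, neg_zero, exp_zero, mul_one, neg_mul,
    neg_le_neg_iff] at hmono
  calc f b = f b * exp (-∫ s in a..b, g s) * exp (∫ s in a..b, g s) := by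
        rw [mul_assoc, ← exp_add, neg_add_cancel, exp_zero, mul_one]
    _ ≤ f a * exp (∫ s in a..b, g s) := by gcongr

theorem le_mul_exp_integral_of_neg_le_deriv {f f' g : ℝ → ℝ} {a b : ℝ} (hab : a ≤ b)
    (hf : ContinuousOn f (Icc a b)) (hf' : ∀ x ∈ Ioo a b, HasDerivAt f (f' x) x)
    (hg : ContinuousOn g (Icc a b)) (hle : ∀ x ∈ Ioo a b, -(g x * f x) ≤ f' x) :
    f a ≤ f b * exp (∫ s in a..b, g s) := by
  have hmono := monotoneOn_mul_exp_neg_integral hab hf hf' hg.neg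
    (fun x hx => by simpa only [Pi.neg_apply, neg_mul] using hle x hx)
    (left_mem_Icc.2 hab) (right_mem_Icc.2 hab) hab
  simpa only [integral_same, neg_zero, exp_zero, mul_one, Pi.neg_apply,
    intervalIntegral.integral_neg, neg_neg] using hmono

theorem hasDerivAt_sq_add_div_sq {w w' w'' α α' : ℝ → ℝ} {t : ℝ}
    (hw : HasDerivAt w (w' t) t) (hw' : HasDerivAt w' (w'' t) t) (hα : HasDerivAt α (α' t) t)
    (hα0 : α t ≠ 0) (heq : w'' t + α t ^ 2 * w t = 0) :
    HasDerivAt (fun t => w t ^ 2 + (w' t / α t) ^ 2)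
      (-2 * (α' t / α t) * (w' t / α t) ^ 2) t := by
  refine ((hw.fun_pow 2).fun_add ((hw'.fun_div hα hα0).fun_pow 2)).congr_deriv ?_
  rw [eq_neg_of_add_eq_zero_left heq]
  simp only [Nat.cast_ofNat, Nat.add_one_sub_one, pow_one]
  field_simp
  ring

theorem abs_neg_two_mul_div_mul_sq_le {α α' w w' : ℝ} (hα : 0 < α) :
    |-2 * (α' / α) * (w' / α) ^ 2| ≤ 2 * (|α'| / α) * (w ^ 2 + (w' / α) ^ 2) := by
  rw [abs_mul, abs_mul, abs_div, abs_of_pos hα, abs_neg, abs_two, abs_sq]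
  gcongr
  exact le_add_of_nonneg_left (sq_nonneg w)

theorem stmt12_general (a b : ℝ)
    (α α' : ℝ → ℝ)
    (hα : ∀ t ∈ Set.Icc a b, HasDerivAt α (α' t) t)
    (hα' : ContinuousOn α' (Set.Icc a b))
    (hαpos : ∀ t ∈ Set.Icc a b, 0 < α t)
    (w w' w'' : ℝ → ℝ)
    (hw : ∀ t ∈ Set.Icc a b, HasDerivAt w (w' t) t)
    (hw' : ∀ t ∈ Set.Icc a b, HasDerivAt w' (w'' t) t)
    (heq : ∀ t ∈ Set.Icc a b, w'' t + α t ^ 2 * w t = 0) :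
    (∀ t ∈ Set.Icc a b,
      HasDerivAt (fun t => w t ^ 2 + (w' t / α t) ^ 2)
        (-2 * (α' t / α t) * (w' t / α t) ^ 2) t) ∧
    (∀ t₁ ∈ Set.Icc a b, ∀ t₂ ∈ Set.Icc a b, t₁ ≤ t₂ →
      (w t₂ ^ 2 + (w' t₂ / α t₂) ^ 2) ≤
        (w t₁ ^ 2 + (w' t₁ / α t₁) ^ 2) *
          Real.exp (2 * ∫ s in t₁..t₂, |α' s| / α s) ∧
      (w t₁ ^ 2 + (w' t₁ / α t₁) ^ 2) ≤
        (w t₂ ^ 2 + (w' t₂ / α t₂) ^ 2) *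
          Real.exp (2 * ∫ s in t₁..t₂, |α' s| / α s)) := by
  have hE (t) (ht : t ∈ Icc a b) := hasDerivAt_sq_add_div_sq (hw t ht) (hw' t ht) (hα t ht)
    (hαpos t ht).ne' (heq t ht)
  refine ⟨hE, fun t₁ ht₁ t₂ ht₂ h12 => ?_⟩
  have hsub : Icc t₁ t₂ ⊆ Icc a b := Icc_subset_Icc ht₁.1 ht₂.2
  have hsub' : Ioo t₁ t₂ ⊆ Icc a b := Ioo_subset_Icc_self.trans hsub
  have hEcont : ContinuousOn (fun t => w t ^ 2 + (w' t / α t) ^ 2) (Icc t₁ t₂) :=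
    fun t ht => (hE t (hsub ht)).continuousAt.continuousWithinAt
  have hαcont : ContinuousOn α (Icc a b) := fun t ht => (hα t ht).continuousAt.continuousWithinAt
  have hg : ContinuousOn (fun s => 2 * (|α' s| / α s)) (Icc t₁ t₂) :=
    (continuousOn_const.mul (hα'.abs.div hαcont fun t ht => (hαpos t ht).ne')).mono hsub
  have hbound (x) (hx : x ∈ Ioo t₁ t₂) :=
    abs_neg_two_mul_div_mul_sq_le (α' := α' x) (w := w x) (w' := w' x) (hαpos x (hsub' hx))
  rw [← integral_const_mul]
  exact ⟨le_mul_exp_integral_of_deriv_le h12 hEcont (fun x hx => hE x (hsub' hx)) hg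
      fun x hx => (le_abs_self _).trans (hbound x hx),
    le_mul_exp_integral_of_neg_le_deriv h12 hEcont (fun x hx => hE x (hsub' hx)) hg
      fun x hx => neg_le_of_abs_le (hbound x hx)⟩

/-- the Gronwall-type two-sided comparability of the modified amplitude
`E = w² + (w'/α)²` for solutions of `w'' + α²w = 0`. -/
theorem stmt12 (a b : ℝ) (hab : a < b)
    (α α' : ℝ → ℝ)
    (hα : ∀ t ∈ Set.Icc a b, HasDerivAt α (α' t) t)
    (hα' : ContinuousOn α' (Set.Icc a b))
    (hαpos : ∀ t ∈ Set.Icc a b, 0 < α t)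
    (w w' w'' : ℝ → ℝ)
    (hw : ∀ t ∈ Set.Icc a b, HasDerivAt w (w' t) t)
    (hw' : ∀ t ∈ Set.Icc a b, HasDerivAt w' (w'' t) t)
    (heq : ∀ t ∈ Set.Icc a b, w'' t + α t ^ 2 * w t = 0) :
    (∀ t ∈ Set.Icc a b,
      HasDerivAt (fun t => w t ^ 2 + (w' t / α t) ^ 2)
        (-2 * (α' t / α t) * (w' t / α t) ^ 2) t) ∧
    (∀ t₁ ∈ Set.Icc a b, ∀ t₂ ∈ Set.Icc a b, t₁ ≤ t₂ →
      (w t₂ ^ 2 + (w' t₂ / α t₂) ^ 2) ≤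
        (w t₁ ^ 2 + (w' t₁ / α t₁) ^ 2) *
          Real.exp (2 * ∫ s in t₁..t₂, |α' s| / α s) ∧
      (w t₁ ^ 2 + (w' t₁ / α t₁) ^ 2) ≤
        (w t₂ ^ 2 + (w' t₂ / α t₂) ^ 2) *
          Real.exp (2 * ∫ s in t₁..t₂, |α' s| / α s)) :=
  stmt12_general a b α α' hα hα' hαpos w w' w'' hw hw' heq
end

section
/- (Minimal amplitude hypothesis for Lipschitz coefficients.) Let c : [0,H] → ℝ be Lipschitz continuous with c_m ≤ c(y) ≤ c_M for all y, and fix ε > 0 and μ₁ > 0. Then there exists r > 0, depending only on ε, c_m, c_M, H, μ₁ and the Lipschitz constant of c, such that for every μ ≥ μ₁, every λ ≥ (c_M + ε)μ², and every normalized Dirichlet solution u (with flux v) of the reduced problem with parameters (μ,λ): u(y)² + v(y)² ≥ r² for all y ∈ [0,H]. -/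
/-!
Along a solution, the energy `E = v² + (λ - c μ²) c u²` has derivative `(λ - 2 μ² c) c' u²`
almost everywhere: the terms coming from `u'` and `v'` cancel because `v = c u'`. Since
`λ ≥ (c_M + ε) μ²`, the weight `(λ - c μ²) c` is at least `ε c_m λ / (c_M + ε)`, while
`|λ - 2 μ² c| ≤ λ` and `|c'| ≤ K`; hence `|E'| ≤ C E` with `C = K (c_M + ε) / (ε c_m)`.
By Grönwall, `E(y) ≥ e^{-C H} E(y₀)`, where `y₀` maximises `u²`, so that `u(y₀)² ≥ 1 / H` by the
normalisation. Finally `E ≤ v² + λ c_M u²` turns this into a lower bound for `u² + v²`, uniform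
in `λ`: it is `≳ λ` when `λ c_M ≤ 1` and `≳ 1 / c_M` otherwise.
-/

open MeasureTheory Set Filter Topology

noncomputable section

theorem AbsolutelyContinuousOnInterval.congr {X : Type*} [PseudoMetricSpace X] {f g : ℝ → X}
    {a b : ℝ} (hf : AbsolutelyContinuousOnInterval f a b) (hfg : EqOn f g (uIcc a b)) :
    AbsolutelyContinuousOnInterval g a b := by
  refine Tendsto.congr' ?_ hf
  filter_upwards [mem_inf_of_right (mem_principal_self _)] with E hE
  exact Finset.sum_congr rfl fun i hi => by rw [hfg (hE.1 i hi).1, hfg (hE.1 i hi).2]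

namespace AbsolutelyContinuousOnInterval

variable {f : ℝ → ℝ} {a b : ℝ}

theorem monotoneOn_of_ae_deriv_nonneg (hf : AbsolutelyContinuousOnInterval f a b)
    (hf' : ∀ᵐ x, x ∈ Ioo a b → 0 ≤ deriv f x) : MonotoneOn f (Icc a b) := by
  intro x hx y hy hxy
  have hsub := (hf.mono (uIcc_subset_uIcc (Icc_subset_uIcc hx)
    (Icc_subset_uIcc hy))).integral_deriv_eq_sub
  suffices 0 ≤ ∫ t in x..y, deriv f t by linarith
  rw [intervalIntegral.integral_of_le hxy, integral_Ioc_eq_integral_Ioo]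
  refine integral_nonneg_of_ae ((ae_restrict_iff' measurableSet_Ioo).2 ?_)
  filter_upwards [hf'] with t ht htxy using ht ⟨hx.1.trans_lt htxy.1, htxy.2.trans_le hy.2⟩

theorem monotoneOn_mul_exp {k : ℝ} (hf : AbsolutelyContinuousOnInterval f a b)
    (hf' : ∀ᵐ x, x ∈ Ioo a b → -(k * f x) ≤ deriv f x) :
    MonotoneOn (fun t => f t * Real.exp (k * t)) (Icc a b) := by
  have hexp : AbsolutelyContinuousOnInterval (fun t => Real.exp (k * t)) a b :=
    (by fun_prop : ContDiff ℝ 1 fun t => Real.exp (k * t)).contDiffOn.absolutelyContinuousOnInterval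
  refine (hf.fun_mul hexp).monotoneOn_of_ae_deriv_nonneg ?_
  filter_upwards [hf', hf.ae_differentiableAt] with x hx hdiff hxab
  have hd := (hdiff (Icc_subset_uIcc (Ioo_subset_Icc_self hxab))).hasDerivAt.fun_mul
    ((hasDerivAt_id' x).const_mul k).exp
  rw [hd.deriv]
  have := hx hxab
  have := Real.exp_pos (k * x)
  nlinarith

/-- Grönwall's inequality, in both directions of time. -/
theorem mul_exp_neg_le {C x y : ℝ} (hf : AbsolutelyContinuousOnInterval f a b)
    (hf' : ∀ᵐ t, t ∈ Ioo a b → |deriv f t| ≤ C * f t) (hx : x ∈ Icc a b) (hy : y ∈ Icc a b) :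
    f x * Real.exp (-(C * |y - x|)) ≤ f y := by
  rcases le_total x y with hxy | hyx
  · have hmono := hf.monotoneOn_mul_exp (k := C) (hf'.mono fun t ht htab => by
      linarith [ht htab, neg_abs_le (deriv f t)]) hx hy hxy
    calc f x * Real.exp (-(C * |y - x|))
        = f x * Real.exp (C * x) * Real.exp (-(C * y)) := by
          rw [abs_of_nonneg (sub_nonneg.2 hxy), mul_assoc, ← Real.exp_add]; ring_nf
      _ ≤ f y * Real.exp (C * y) * Real.exp (-(C * y)) := by gcongr
      _ = f y := by rw [mul_assoc, ← Real.exp_add]; simp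
  · have hmono := hf.fun_neg.monotoneOn_mul_exp (k := -C) (hf'.mono fun t ht htab => by
      rw [deriv.fun_neg]
      linarith [ht htab, le_abs_self (deriv f t)]) hy hx hyx
    simp only [neg_mul] at hmono
    calc f x * Real.exp (-(C * |y - x|))
        = f x * Real.exp (-(C * x)) * Real.exp (C * y) := by
          rw [abs_of_nonpos (sub_nonpos.2 hyx), mul_assoc, ← Real.exp_add]; ring_nf
      _ ≤ f y * Real.exp (-(C * y)) * Real.exp (C * y) := by
          gcongr ?_ * _; linarith
      _ = f y := by rw [mul_assoc, ← Real.exp_add]; simp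

end AbsolutelyContinuousOnInterval

section Primitive

variable {u g : ℝ → ℝ} {a b : ℝ}

theorem absolutelyContinuousOnInterval_of_eq_add_integral (hab : a ≤ b)
    (hg : IntervalIntegrable g volume a b) (hu : ∀ y ∈ Icc a b, u y = u a + ∫ t in a..y, g t) :
    AbsolutelyContinuousOnInterval u a b := by
  refine ((LipschitzWith.const (u a)).lipschitzOnWith.absolutelyContinuousOnInterval.fun_add
    (hg.absolutelyContinuousOnInterval_intervalIntegral left_mem_uIcc)).congr fun y hy => ?_
  rw [uIcc_of_le hab] at hy
  exact (hu y hy).symm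

theorem ae_hasDerivAt_of_eq_add_integral (hg : IntervalIntegrable g volume a b)
    (hu : ∀ y ∈ Icc a b, u y = u a + ∫ t in a..y, g t) :
    ∀ᵐ x, x ∈ Ioo a b → HasDerivAt u (g x) x := by
  filter_upwards [hg.ae_hasDerivAt_integral] with x hx hxab
  refine ((hx (Icc_subset_uIcc (Ioo_subset_Icc_self hxab)) a left_mem_uIcc).const_add (u a)
    ).congr_of_eventuallyEq ?_
  filter_upwards [Ioo_mem_nhds hxab.1 hxab.2] with y hy using hu y (Ioo_subset_Icc_self hy)

end Primitive

theorem exists_integral_le_mul_of_continuousOn {f : ℝ → ℝ} {a b : ℝ} (hab : a ≤ b)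
    (hf : ContinuousOn f (Icc a b)) : ∃ y ∈ Icc a b, ∫ x in a..b, f x ≤ (b - a) * f y := by
  obtain ⟨y, hy, hmax⟩ := isCompact_Icc.exists_isMaxOn (nonempty_Icc.2 hab) hf
  refine ⟨y, hy, ?_⟩
  calc ∫ x in a..b, f x ≤ ∫ _ in a..b, f y :=
        intervalIntegral.integral_mono_on hab ((uIcc_of_le hab).symm ▸ hf).intervalIntegrable
          intervalIntegrable_const fun x hx => hmax hx
    _ = (b - a) * f y := by simp

def reducedEnergy (c : ℝ → ℝ) (μ lam : ℝ) (u v : ℝ → ℝ) (y : ℝ) : ℝ :=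
  v y ^ 2 + (lam - c y * μ ^ 2) * c y * u y ^ 2

section ReducedEnergy

variable {c : ℝ → ℝ} {μ lam : ℝ} {u v : ℝ → ℝ} {y : ℝ}

theorem mul_sq_le_reducedEnergy {a₀ : ℝ} (h : a₀ ≤ (lam - c y * μ ^ 2) * c y) :
    a₀ * u y ^ 2 ≤ reducedEnergy c μ lam u v y := by
  unfold reducedEnergy
  nlinarith [mul_le_mul_of_nonneg_right h (sq_nonneg (u y)), sq_nonneg (v y)]

theorem reducedEnergy_le {cM : ℝ} (hc : 0 ≤ c y ∧ c y ≤ cM) (hcμ : c y * μ ^ 2 ≤ lam) :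
    reducedEnergy c μ lam u v y ≤ v y ^ 2 + lam * cM * u y ^ 2 := by
  have hA : (lam - c y * μ ^ 2) * c y ≤ lam * cM := by
    nlinarith [mul_nonneg (mul_nonneg hc.1 hc.1) (sq_nonneg μ),
      mul_nonneg (mul_nonneg hc.1 (sq_nonneg μ)) (sub_nonneg.2 hc.2)]
  unfold reducedEnergy
  nlinarith [mul_le_mul_of_nonneg_right hA (sq_nonneg (u y))]

theorem mul_sq_le_of_add_mul_sq_le {κ cM ε : ℝ} (hκ : κ ≤ cM) (hε : 0 ≤ ε)
    (hlam : (cM + ε) * μ ^ 2 ≤ lam) : κ * μ ^ 2 ≤ lam := by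
  nlinarith [sq_nonneg μ]

theorem le_sub_mul_sq_mul {cm cM ε : ℝ} (hcm : 0 < cm) (hε : 0 < ε) (hc : cm ≤ c y ∧ c y ≤ cM)
    (hlam : (cM + ε) * μ ^ 2 ≤ lam) : ε * cm / (cM + ε) * lam ≤ (lam - c y * μ ^ 2) * c y := by
  have hcMε : 0 < cM + ε := by linarith
  have hlam0 : 0 ≤ lam := (mul_nonneg hcMε.le (sq_nonneg μ)).trans hlam
  have hgap : ε / (cM + ε) * lam ≤ lam - c y * μ ^ 2 := by
    rw [div_mul_eq_mul_div, div_le_iff₀ hcMε]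
    nlinarith [mul_nonneg (mul_nonneg (sq_nonneg μ) hcMε.le) (sub_nonneg.2 hc.2),
      mul_nonneg (hcm.le.trans (hc.1.trans hc.2)) (sub_nonneg.2 hlam)]
  calc ε * cm / (cM + ε) * lam = ε / (cM + ε) * lam * cm := by ring
    _ ≤ (lam - c y * μ ^ 2) * c y :=
        mul_le_mul hgap hc.1 hcm.le ((by positivity : 0 ≤ ε / (cM + ε) * lam).trans hgap)

end ReducedEnergy

namespace IsReducedSolutionOn

variable {a b : ℝ} {c : ℝ → ℝ} {μ lam : ℝ} {u v g : ℝ → ℝ}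

theorem absolutelyContinuousOnInterval_u (hab : a ≤ b)
    (hsol : IsReducedSolutionOn a b c μ lam u v g) : AbsolutelyContinuousOnInterval u a b :=
  absolutelyContinuousOnInterval_of_eq_add_integral hab hsol.1 hsol.2.2.1

theorem absolutelyContinuousOnInterval_reducedEnergy (hab : a ≤ b)
    (hsol : IsReducedSolutionOn a b c μ lam u v g) (hc : AbsolutelyContinuousOnInterval c a b) :
    AbsolutelyContinuousOnInterval (reducedEnergy c μ lam u v) a b := by
  have hu := hsol.absolutelyContinuousOnInterval_u hab
  have hv := absolutelyContinuousOnInterval_of_eq_add_integral hab hsol.2.2.2.2.1 hsol.2.2.2.2.2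
  have hA : AbsolutelyContinuousOnInterval (fun y => (lam - c y * μ ^ 2) * c y) a b :=
    ((hc.const_mul lam).fun_sub ((hc.fun_mul hc).const_mul (μ ^ 2))).congr fun y _ => by ring
  exact ((hv.fun_mul hv).fun_add (hA.fun_mul (hu.fun_mul hu))).congr fun y _ => by
    simp only [reducedEnergy]; ring

theorem ae_hasDerivAt_reducedEnergy (hsol : IsReducedSolutionOn a b c μ lam u v g)
    (hc : ∀ᵐ x, x ∈ Ioo a b → DifferentiableAt ℝ c x) :
    ∀ᵐ x, x ∈ Ioo a b → HasDerivAt (reducedEnergy c μ lam u v)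
      ((lam - 2 * μ ^ 2 * c x) * deriv c x * u x ^ 2) x := by
  obtain ⟨hg, -, hu, hvcg, hf, hv⟩ := hsol
  filter_upwards [ae_hasDerivAt_of_eq_add_integral hg hu, ae_hasDerivAt_of_eq_add_integral hf hv,
    hc, (ae_restrict_iff' measurableSet_Ioo).1 hvcg] with x hu' hv' hc' hvx hx
  have hc'' := (hc' hx).hasDerivAt
  refine (((hv' hx).fun_pow 2).fun_add ((((hasDerivAt_const x lam).fun_sub
    (hc''.mul_const (μ ^ 2))).fun_mul hc'').fun_mul ((hu' hx).fun_pow 2))).congr_deriv ?_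
  rw [hvx hx]
  push_cast
  ring

theorem ae_abs_deriv_reducedEnergy_le {K : NNReal} (hab : a ≤ b)
    (hsol : IsReducedSolutionOn a b c μ lam u v g) (hcLip : LipschitzOnWith K c (Icc a b))
    (hc : ∀ y ∈ Icc a b, 0 ≤ c y ∧ c y * μ ^ 2 ≤ lam) :
    ∀ᵐ x, x ∈ Ioo a b → |deriv (reducedEnergy c μ lam u v) x| ≤ K * lam * u x ^ 2 := by
  have hcAC : AbsolutelyContinuousOnInterval c a b :=
    (uIcc_of_le hab ▸ hcLip).absolutelyContinuousOnInterval
  filter_upwards [hsol.ae_hasDerivAt_reducedEnergy (hcAC.ae_differentiableAt.mono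
    fun x h hx => h (Icc_subset_uIcc (Ioo_subset_Icc_self hx)))] with x hE hx
  obtain ⟨hc0, hcμ⟩ := hc x (Ioo_subset_Icc_self hx)
  have hlam : |lam - 2 * μ ^ 2 * c x| ≤ lam :=
    abs_le.2 ⟨by nlinarith [sq_nonneg μ], by nlinarith [sq_nonneg μ]⟩
  have hc' : |deriv c x| ≤ K := norm_deriv_le_of_lipschitzOn (Icc_mem_nhds hx.1 hx.2) hcLip
  rw [(hE hx).deriv, abs_mul, abs_mul, abs_of_nonneg (sq_nonneg (u x)), mul_comm (K : ℝ)]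
  gcongr
  exact (abs_nonneg _).trans hlam

theorem mul_sq_mul_exp_neg_le_reducedEnergy {K : NNReal} {cm cM ε x y : ℝ} (hcm : 0 < cm)
    (hε : 0 < ε) (hab : a ≤ b) (hsol : IsReducedSolutionOn a b c μ lam u v g)
    (hcLip : LipschitzOnWith K c (Icc a b)) (hcB : ∀ y ∈ Icc a b, cm ≤ c y ∧ c y ≤ cM)
    (hlam : (cM + ε) * μ ^ 2 ≤ lam) (hx : x ∈ Icc a b) (hy : y ∈ Icc a b) :
    ε * cm / (cM + ε) * lam * u x ^ 2 * Real.exp (-(K * (cM + ε) / (ε * cm) * (b - a)))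
      ≤ reducedEnergy c μ lam u v y := by
  set C := K * (cM + ε) / (ε * cm)
  set a₀ := ε * cm / (cM + ε) * lam
  have hcMε : 0 < cM + ε := by linarith [hcm.trans_le ((hcB x hx).1.trans (hcB x hx).2)]
  have ha₀ : 0 ≤ a₀ := by
    have := (mul_nonneg hcMε.le (sq_nonneg μ)).trans hlam
    positivity
  have hE : ∀ t ∈ Icc a b, a₀ * u t ^ 2 ≤ reducedEnergy c μ lam u v t := fun t ht =>
    mul_sq_le_reducedEnergy (le_sub_mul_sq_mul hcm hε (hcB t ht) hlam)
  have hcoeff : ∀ t ∈ Icc a b, 0 ≤ c t ∧ c t * μ ^ 2 ≤ lam := fun t ht =>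
    ⟨hcm.le.trans (hcB t ht).1, mul_sq_le_of_add_mul_sq_le (hcB t ht).2 hε.le hlam⟩
  have hderiv : ∀ᵐ t, t ∈ Ioo a b →
      |deriv (reducedEnergy c μ lam u v) t| ≤ C * reducedEnergy c μ lam u v t := by
    filter_upwards [hsol.ae_abs_deriv_reducedEnergy_le hab hcLip hcoeff] with t ht htab
    calc _ ≤ K * lam * u t ^ 2 := ht htab
      _ = C * (a₀ * u t ^ 2) := by simp only [C, a₀]; field_simp
      _ ≤ C * reducedEnergy c μ lam u v t := by
        gcongr
        exact hE t (Ioo_subset_Icc_self htab)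
  have hdist : |y - x| ≤ b - a :=
    abs_sub_le_iff.2 ⟨by linarith [hy.2, hx.1], by linarith [hy.1, hx.2]⟩
  calc a₀ * u x ^ 2 * Real.exp (-(C * (b - a)))
      ≤ reducedEnergy c μ lam u v x * Real.exp (-(C * |y - x|)) := by
        gcongr
        exacts [(by positivity : 0 ≤ a₀ * u x ^ 2).trans (hE x hx), hE x hx]
    _ ≤ reducedEnergy c μ lam u v y :=
        (hsol.absolutelyContinuousOnInterval_reducedEnergy hab (uIcc_of_le hab ▸ hcLip
          ).absolutelyContinuousOnInterval).mul_exp_neg_le hderiv hx hy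

end IsReducedSolutionOn

theorem mul_min_le_add_of_mul_le {Q m lam cM p q : ℝ} (hQ : 0 ≤ Q) (hcM : 0 < cM) (hp : 0 ≤ p)
    (hq : 0 ≤ q) (hm : m ≤ lam) (h : Q * lam ≤ q + lam * cM * p) : Q * min m cM⁻¹ ≤ p + q := by
  rcases le_total (lam * cM) 1 with hsmall | hlarge
  · calc Q * min m cM⁻¹ ≤ Q * lam := by gcongr; exact (min_le_left _ _).trans hm
      _ ≤ q + lam * cM * p := h
      _ ≤ p + q := by nlinarith
  · have hlam : 0 < lam := pos_of_mul_pos_left (by linarith) hcM.le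
    have : Q * lam ≤ cM * (p + q) * lam := by nlinarith
    calc Q * min m cM⁻¹ ≤ Q * cM⁻¹ := by gcongr; exact min_le_right _ _
      _ ≤ p + q := by
        rw [← div_eq_mul_inv, div_le_iff₀ hcM]
        nlinarith [le_of_mul_le_mul_right this hlam]

/-- the minimal amplitude hypothesis holds for Lipschitz coefficients,
with `r` depending only on `ε, cm, cM, H, μ₁` and the Lipschitz constant `K`. -/
theorem stmt13 (cm cM H : ℝ) (hcm : 0 < cm) (hcmM : cm < cM) (hH : 0 < H)
    (K : NNReal) (ε μ₁ : ℝ) (hε : 0 < ε) (hμ₁ : 0 < μ₁) :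
    ∃ r > (0:ℝ),
      ∀ c : ℝ → ℝ, LipschitzOnWith K c (Set.Icc 0 H) →
      (∀ y ∈ Set.Icc (0 : ℝ) H, cm ≤ c y ∧ c y ≤ cM) →
      ∀ μ : ℝ, μ₁ ≤ μ → ∀ lam : ℝ, (cM + ε) * μ ^ 2 ≤ lam →
      ∀ u v g : ℝ → ℝ, IsReducedSolutionOn 0 H c μ lam u v g →
      u 0 = 0 → u H = 0 → (∫ y in (0:ℝ)..H, u y ^ 2) = 1 →
      ∀ y ∈ Set.Icc (0 : ℝ) H, r ^ 2 ≤ u y ^ 2 + v y ^ 2 := by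
  have hcM : 0 < cM := hcm.trans hcmM
  set Q := ε * cm / ((cM + ε) * H) * Real.exp (-(K * (cM + ε) / (ε * cm) * H))
  refine ⟨√(Q * min ((cM + ε) * μ₁ ^ 2) cM⁻¹), by positivity, ?_⟩
  intro c hcLip hcB μ hμ lam hlam u v g hsol _ _ hnorm y hy
  rw [Real.sq_sqrt (by positivity)]
  have hlam₁ : (cM + ε) * μ₁ ^ 2 ≤ lam := le_trans (by gcongr) hlam
  have hlam₀ : 0 < lam := lt_of_lt_of_le (by positivity) hlam₁
  obtain ⟨y₀, hy₀, hy₀max⟩ := exists_integral_le_mul_of_continuousOn hH.le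
    ((uIcc_of_le hH.le ▸ (hsol.absolutelyContinuousOnInterval_u hH.le).continuousOn).pow 2)
  have hy₀sq : H⁻¹ ≤ u y₀ ^ 2 := by
    rw [inv_le_iff_one_le_mul₀' hH]; simpa [hnorm] using hy₀max
  refine mul_min_le_add_of_mul_le (by positivity) hcM (sq_nonneg _) (sq_nonneg _) hlam₁ ?_
  calc Q * lam = ε * cm / (cM + ε) * lam * H⁻¹
        * Real.exp (-(K * (cM + ε) / (ε * cm) * (H - 0))) := by simp only [Q, sub_zero]; field_simp
    _ ≤ ε * cm / (cM + ε) * lam * u y₀ ^ 2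
        * Real.exp (-(K * (cM + ε) / (ε * cm) * (H - 0))) := by gcongr
    _ ≤ reducedEnergy c μ lam u v y :=
        hsol.mul_sq_mul_exp_neg_le_reducedEnergy hcm hε hH.le hcLip hcB hlam hy₀ hy
    _ ≤ v y ^ 2 + lam * cM * u y ^ 2 :=
        reducedEnergy_le ⟨hcm.le.trans (hcB y hy).1, (hcB y hy).2⟩
          (mul_sq_le_of_add_mul_sq_le (hcB y hy).2 hε.le hlam)
end
end
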